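/- Let (Ω, 𝓕, μ) be a probability space, G a finite type, X : Ω → G a measurable map, and A, B measurable events with μ(B) ≠ 0. Suppose the event B is independent of X, i.e. μ(B ∩ X⁻¹{g}) = μ(B)·μ(X⁻¹{g}) for every g ∈ G. Then μ[A | B] = Σ_{g ∈ G} μ[A | B ∩ X⁻¹{g}] · μ(X⁻¹{g}), i.e. the conditional probability of A given B equals the mixture over g of the conditional probabilities of A given B ∩ X⁻¹{g}, weighted by the unconditional probabilities μ(X⁻¹{g}). -/
import Mathlib


open MeasureTheory ProbabilityTheory

/-- Backdoor adjustment core: if the event `B` is independent of the finite-valued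
random variable `X`, then the conditional probability of `A` given `B` is the mixture
over `g` of the conditional probabilities of `A` given `B ∩ X⁻¹{g}`, weighted by
the unconditional probabilities `μ (X ⁻¹' {g})`. -/
theorem cond_eq_sum_cond_inter_of_indep
    {Ω : Type*} [MeasurableSpace Ω] (μ : Measure Ω) [IsProbabilityMeasure μ]
    {G : Type*} [Fintype G] [MeasurableSpace G] [MeasurableSingletonClass G]
    (X : Ω → G) (hX : Measurable X)
    (A B : Set Ω) (hA : MeasurableSet A) (hB : MeasurableSet B)
    (hB0 : μ B ≠ 0)
    (hindep : ∀ g : G, μ (B ∩ X ⁻¹' {g}) = μ B * μ (X ⁻¹' {g})) :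
    μ[A | B] = ∑ g : G, μ[A | B ∩ X ⁻¹' {g}] * μ (X ⁻¹' {g}) := by
  have hBfin : μ B ≠ ⊤ := measure_ne_top μ B
  have hsum : ∑ g : G, μ (B ∩ X ⁻¹' {g} ∩ A) = μ (B ∩ A) := by
    rw [← measure_biUnion_finset]
    · congr 1
      ext ω
      simp
    · intro i _ j _ hij
      exact fun s hsi hsj ω hω => absurd (((hsi hω).1.2).symm.trans ((hsj hω).1.2)) hij
    · intro g _
      exact ((hB.inter (hX (measurableSet_singleton g))).inter hA)
  rw [cond_apply hB]
  calc (μ B)⁻¹ * μ (B ∩ A)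
      = ∑ g : G, (μ B)⁻¹ * μ (B ∩ X ⁻¹' {g} ∩ A) := by
        rw [← Finset.mul_sum, hsum]
    _ = ∑ g : G, μ[A | B ∩ X ⁻¹' {g}] * μ (X ⁻¹' {g}) := by
        refine Finset.sum_congr rfl fun g _ => ?_
        rw [cond_apply (hB.inter (hX (measurableSet_singleton g)))]
        by_cases hg : μ (X ⁻¹' {g}) = 0
        · have : μ (B ∩ X ⁻¹' {g} ∩ A) = 0 :=
            measure_mono_null (fun ω hω => hω.1.2) hg
          simp [this, hg]
        · have hgfin : μ (X ⁻¹' {g}) ≠ ⊤ := measure_ne_top _ _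
          rw [hindep g, ENNReal.mul_inv (Or.inl hB0) (Or.inl hBfin)]
          rw [mul_right_comm ((μ B)⁻¹ * (μ (X ⁻¹' {g}))⁻¹),
            mul_assoc (μ B)⁻¹, ENNReal.inv_mul_cancel hg hgfin, mul_one]
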